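/- arXiv:2002.05215 — 5 statements merged into one kernel-verified Lean document; each statement's English description precedes it below -/
import Mathlib

section
/- Let a, b, ε be real numbers with a > 0, b ≥ 0, c := log a − b/a ≥ 0 and ε ∈ (0, 1/e). Then the equation a·y − b = ε·e^y has exactly two real solutions y₁ < y₂; the smaller one satisfies y₁ = d + b/a for some d ∈ (0,1); and the larger one satisfies y₂ = −log ε + log a + log(−log ε + log a − b/a) + o(1), where the o(1) term tends to 0 as ε·e^{−c} → 0, uniformly over all admissible triples (a,b,ε): for every δ > 0 there exists η > 0 such that whenever a > 0, b ≥ 0, c = log a − b/a ≥ 0, ε ∈ (0,1/e) and ε·e^{−c} < η, one has |y₂ − (−log ε + log a + log(−log ε + log a − b/a))| < δ. -/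
/-!
Substituting `y = x + b/a` turns `a·y - b = ε·e^y` into `x = t·e^x`, i.e. `x·e^{-x} = t`, with
`t = ε·e^{-c} ∈ (0, 1/e)`. Since `x·e^{-x}` increases on `(-∞, 1]` from `-∞` to `1/e` and decreases
on `[1, ∞)` to `0`, there is exactly one solution in `(0, 1)` and one in `(1, ∞)`. The larger one
satisfies `x - log x = L := -log t`, so `x - (L + log L) = log (x/L) ≤ x/L - 1 = log x / L`, which is
at most `2 log x / x` because `x ≤ 2L`; this tends to `0` as `x > L → ∞`, i.e. as `t → 0`.
-/

open Real Set Filter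

lemma hasDerivAt_mul_exp_neg (x : ℝ) :
    HasDerivAt (fun x => x * exp (-x)) ((1 - x) * exp (-x)) x := by
  have : HasDerivAt (fun x => x * exp (-x)) (1 * exp (-x) + x * (exp (-x) * -1)) x :=
    (hasDerivAt_id' x).mul (hasDerivAt_neg x).exp
  convert this using 1
  ring

lemma continuous_mul_exp_neg : Continuous fun x : ℝ => x * exp (-x) := by fun_prop

lemma strictMonoOn_mul_exp_neg : StrictMonoOn (fun x : ℝ => x * exp (-x)) (Iic 1) := by
  refine strictMonoOn_of_deriv_pos (convex_Iic 1) continuous_mul_exp_neg.continuousOn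
    fun x hx => ?_
  rw [interior_Iic] at hx
  rw [(hasDerivAt_mul_exp_neg x).deriv]
  exact mul_pos (sub_pos.2 hx) (exp_pos _)

lemma strictAntiOn_mul_exp_neg : StrictAntiOn (fun x : ℝ => x * exp (-x)) (Ici 1) := by
  refine strictAntiOn_of_deriv_neg (convex_Ici 1) continuous_mul_exp_neg.continuousOn
    fun x hx => ?_
  rw [interior_Ici] at hx
  rw [(hasDerivAt_mul_exp_neg x).deriv]
  exact mul_neg_of_neg_of_pos (sub_neg.2 hx) (exp_pos _)

lemma eq_mul_exp_iff (t x : ℝ) : x = t * exp x ↔ x * exp (-x) = t := by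
  rw [exp_neg, ← div_eq_mul_inv, div_eq_iff (exp_ne_zero x), eq_comm]

theorem setOf_eq_mul_exp_eq_pair {t : ℝ} (ht : t ∈ Ioo 0 (exp 1)⁻¹) :
    ∃ x₁ x₂ : ℝ, x₁ ∈ Ioo 0 1 ∧ 1 < x₂ ∧ {x : ℝ | x = t * exp x} = {x₁, x₂} := by
  have hf1 : 1 * exp (-1) = (exp 1)⁻¹ := by rw [one_mul, exp_neg]
  obtain ⟨x₁, hx₁, hfx₁⟩ := intermediate_value_Ioo zero_le_one
    continuous_mul_exp_neg.continuousOn (show t ∈ Ioo (0 * exp (-0)) (1 * exp (-1)) by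
      rwa [zero_mul, hf1])
  obtain ⟨M, hM1, hMt⟩ : ∃ M ≥ (1 : ℝ), M * exp (-M) < t := by
    have := (tendsto_pow_mul_exp_neg_atTop_nhds_zero 1).eventually (gt_mem_nhds ht.1)
    simp only [pow_one] at this
    exact ((eventually_ge_atTop 1).and this).exists
  obtain ⟨x₂, hx₂, hfx₂⟩ := intermediate_value_Ioo' hM1 continuous_mul_exp_neg.continuousOn
    (show t ∈ Ioo (M * exp (-M)) (1 * exp (-1)) from ⟨hMt, hf1 ▸ ht.2⟩)
  refine ⟨x₁, x₂, hx₁, hx₂.1, Set.ext fun x => ?_⟩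
  simp only [mem_ofPred_eq, mem_insert_iff, mem_singleton_iff, eq_mul_exp_iff]
  constructor
  · intro h
    rcases le_total x 1 with hle | hge
    · exact .inl (strictMonoOn_mul_exp_neg.injOn hle hx₁.2.le (h.trans hfx₁.symm))
    · exact .inr (strictAntiOn_mul_exp_neg.injOn hge hx₂.1.le (h.trans hfx₂.symm))
  · rintro (rfl | rfl)
    exacts [hfx₁, hfx₂]

lemma log_le_half_self {x : ℝ} (hx : 0 < x) : log x ≤ x / 2 := by
  rw [log_le_iff_le_exp hx]
  nlinarith [quadratic_le_exp_of_nonneg (by positivity : 0 ≤ x / 2)]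

lemma sub_log_add_log_log_mem_Ioc {x L : ℝ} (hx : 1 < x) (hL : x - log x = L) :
    x - (L + log L) ∈ Ioc 0 (2 * (log x / x)) := by
  have hx0 : 0 < x := by linarith
  have hlogx : 0 < log x := log_pos hx
  have hL0 : 0 < L := by linarith [log_le_sub_one_of_pos hx0]
  have hx2L : x ≤ 2 * L := by linarith [log_le_half_self hx0]
  have hdiff : x - (L + log L) = log (x / L) := by
    rw [log_div hx0.ne' hL0.ne']
    linarith
  refine ⟨hdiff ▸ log_pos ((one_lt_div hL0).2 (by linarith)), ?_⟩
  calc x - (L + log L) ≤ x / L - 1 := hdiff ▸ log_le_sub_one_of_pos (div_pos hx0 hL0)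
    _ = log x / L := by field_simp; linarith
    _ ≤ 2 * (log x / x) := by
      rw [mul_div_assoc', div_le_div_iff₀ hL0 hx0]
      nlinarith

theorem exists_abs_sub_neg_log_add_log_neg_log_lt {δ : ℝ} (hδ : 0 < δ) :
    ∃ η > 0, ∀ t x : ℝ, 0 < t → t < η → 1 < x → x = t * exp x →
      |x - (-log t + log (-log t))| < δ := by
  obtain ⟨X, hX⟩ := eventually_atTop.1 (isLittleO_log_id_atTop.bound (by positivity : 0 < δ / 4))
  refine ⟨exp (-X), exp_pos _, fun t x ht htη hx hxt => ?_⟩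
  have hx0 : 0 < x := by linarith
  have hL : x - log x = -log t := by
    rw [hxt, log_mul ht.ne' (exp_ne_zero x), log_exp, ← hxt]
    ring
  have hXL : X < -log t := by
    linarith [log_exp (-X) ▸ log_lt_log ht htη]
  obtain ⟨hpos, hle⟩ := sub_log_add_log_log_mem_Ioc hx hL
  have hlogx : log x / x ≤ δ / 4 := by
    have := hX x (by linarith [log_pos hx])
    rw [id, norm_of_nonneg (log_nonneg hx.le), norm_of_nonneg hx0.le] at this
    exact (div_le_iff₀ hx0).2 this
  rw [abs_of_pos hpos]
  linarith

lemma mul_sub_eq_mul_exp_iff {a : ℝ} (ha : 0 < a) (b ε y : ℝ) :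
    a * y - b = ε * exp y ↔ y - b / a = ε * exp (-(log a - b / a)) * exp (y - b / a) := by
  rw [mul_assoc, ← exp_add, show -(log a - b / a) + (y - b / a) = y - log a by ring,
    exp_sub, exp_log ha]
  field_simp

theorem exists_setOf_mul_sub_eq_mul_exp_eq_pair {a b ε : ℝ} (ha : 0 < a)
    (hc : 0 ≤ log a - b / a) (hε : ε ∈ Ioo 0 (exp 1)⁻¹) :
    ∃ x₁ x₂ : ℝ, x₁ ∈ Ioo 0 1 ∧ 1 < x₂ ∧ x₂ = ε * exp (-(log a - b / a)) * exp x₂ ∧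
      {y : ℝ | a * y - b = ε * exp y} = {x₁ + b / a, x₂ + b / a} := by
  have ht : ε * exp (-(log a - b / a)) ∈ Ioo 0 (exp 1)⁻¹ :=
    ⟨mul_pos hε.1 (exp_pos _),
      (mul_le_of_le_one_right hε.1.le (exp_le_one_iff.2 (by linarith))).trans_lt hε.2⟩
  obtain ⟨x₁, x₂, hx₁, hx₂, hS⟩ := setOf_eq_mul_exp_eq_pair ht
  refine ⟨x₁, x₂, hx₁, hx₂, (Set.ext_iff.1 hS x₂).2 (by simp), Set.ext fun y => ?_⟩
  have hy := Set.ext_iff.1 hS (y - b / a)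
  simp only [mem_ofPred_eq, mem_insert_iff, mem_singleton_iff] at hy ⊢
  rw [mul_sub_eq_mul_exp_iff ha, hy, sub_eq_iff_eq_add, sub_eq_iff_eq_add]

/-- for `a > 0`, `b ≥ 0`, `c := log a - b/a ≥ 0` and `ε ∈ (0, 1/e)`, the
equation `a·y - b = ε·e^y` has exactly two real solutions `y₁ < y₂`; the smaller one is
`y₁ = d + b/a` with `d ∈ (0,1)`; and the larger one satisfies
`y₂ = -log ε + log a + log(-log ε + log a - b/a) + o(1)`, the `o(1)` term tending to `0`
as `ε·e^{-c} → 0`, uniformly over all admissible triples `(a, b, ε)`. -/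
theorem lambert_two_solutions :
    (∀ a b ε : ℝ, 0 < a → 0 ≤ b → 0 ≤ Real.log a - b / a →
      ε ∈ Set.Ioo 0 (Real.exp 1)⁻¹ →
      ∃ y₁ y₂ : ℝ, y₁ < y₂ ∧
        {y : ℝ | a * y - b = ε * Real.exp y} = {y₁, y₂} ∧
        y₁ - b / a ∈ Set.Ioo (0 : ℝ) 1) ∧
    (∀ δ : ℝ, 0 < δ → ∃ η : ℝ, 0 < η ∧
      ∀ a b ε y₂ : ℝ, 0 < a → 0 ≤ b → 0 ≤ Real.log a - b / a →
        ε ∈ Set.Ioo 0 (Real.exp 1)⁻¹ →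
        ε * Real.exp (-(Real.log a - b / a)) < η →
        (a * y₂ - b = ε * Real.exp y₂ ∧
          ∀ y : ℝ, a * y - b = ε * Real.exp y → y ≤ y₂) →
        |y₂ - (-Real.log ε + Real.log a +
            Real.log (-Real.log ε + Real.log a - b / a))| < δ) := by
  constructor
  · intro a b ε ha _ hc hε
    obtain ⟨x₁, x₂, hx₁, hx₂, -, hS⟩ := exists_setOf_mul_sub_eq_mul_exp_eq_pair ha hc hε
    exact ⟨x₁ + b / a, x₂ + b / a, by linarith [hx₁.2], hS, by simpa using hx₁⟩
  · intro δ hδ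
    obtain ⟨η, hη, hasymp⟩ := exists_abs_sub_neg_log_add_log_neg_log_lt hδ
    refine ⟨η, hη, fun a b ε y₂ ha _ hc hε htη ⟨hy₂, hmax⟩ => ?_⟩
    obtain ⟨x₁, x₂, hx₁, hx₂, hx₂t, hS⟩ := exists_setOf_mul_sub_eq_mul_exp_eq_pair ha hc hε
    have hy₂x₂ : y₂ = x₂ + b / a := by
      have hle : x₂ + b / a ≤ y₂ := hmax _ (hS.symm ▸ Or.inr rfl :
        x₂ + b / a ∈ {y : ℝ | a * y - b = ε * exp y})
      rcases (show y₂ ∈ ({x₁ + b / a, x₂ + b / a} : Set ℝ) from hS ▸ hy₂) with h | h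
      · linarith [hx₁.2]
      · exact h
    have hlogt : -log (ε * exp (-(log a - b / a))) = -log ε + log a - b / a := by
      rw [log_mul hε.1.ne' (exp_ne_zero _), log_exp]
      ring
    have := hasymp _ x₂ (mul_pos hε.1 (exp_pos _)) htη hx₂ hx₂t
    rw [hlogt] at this
    convert this using 2
    rw [hy₂x₂]
    ring
end

section
/- Let b > 0 and let X be a nonnegative random variable with lim_{t→∞} t·P{X > t} = b. Then ψ*(1/t) ~ G*(t) ~ H*(t) ~ b·log t as t → ∞, i.e. each of ψ*(1/t)/(b log t), G*(t)/(b log t) and H*(t)/(b log t) tends to 1 as t → ∞. -/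
open MeasureTheory Filter

noncomputable section

variable {Ω : Type*} [MeasurableSpace Ω]

/-- `ψ*(s) = s⁻¹ (1 - E e^{-sX})`. -/
def psiStar (P : Measure Ω) (X : Ω → ℝ) (s : ℝ) : ℝ :=
  (1 - ∫ ω, Real.exp (-(s * X ω)) ∂P) / s

/-- `G*(s) = ∫₀^s P{X > y} dy`. -/
def GStar (P : Measure Ω) (X : Ω → ℝ) (s : ℝ) : ℝ :=
  ∫ y in (0 : ℝ)..s, (P {ω | y < X ω}).toReal

/-- `H*(s) = E[X 1_{X ≤ s}]`. -/
def HStar (P : Measure Ω) (X : Ω → ℝ) (s : ℝ) : ℝ :=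
  ∫ ω, (if X ω ≤ s then X ω else 0) ∂P

/-!
With `F y = P{X > y}` the hypothesis reads `F y ≈ b / y`, so `G*(t) = ∫₀^t F ≈ b log t`.
By the layer-cake formula `G*(t) = E[min X t]`, and `min X t = X 1_{X ≤ t} + t 1_{X > t}` gives
`H*(t) = G*(t) - t F t = G*(t) + O(1)`. Finally `ψ*(1/t) = E[t (1 - e^{-X/t})]`, whose integrand
lies between `e^{-a} X 1_{X ≤ a t}` and `min X t`; hence `e^{-a} H*(a t) ≤ ψ*(1/t) ≤ G*(t)`,
and letting `a → 0` squeezes `ψ*(1/t)` as well.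
-/

open Set Real Topology

section LogAverage

variable {f : ℝ → ℝ} {a b c : ℝ}

lemma eventually_lt_intervalIntegral_div_log (hf : ∀ u v, IntervalIntegrable f volume u v)
    (hc : ∀ᶠ y in atTop, c ≤ y * f y) (hbc : b < c) :
    ∀ᶠ t in atTop, b < (∫ y in a..t, f y) / log t := by
  obtain ⟨T, hT⟩ := eventually_atTop.1 (hc.and (eventually_gt_atTop 0))
  set K := (∫ y in a..T, f y) - c * log T
  have hlim : Tendsto (fun t => K * (log t)⁻¹ + c) atTop (𝓝 c) := by
    simpa using (tendsto_log_atTop.inv_tendsto_atTop.const_mul K).add_const c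
  filter_upwards [hlim.eventually_const_lt hbc, eventually_ge_atTop T, eventually_gt_atTop 1]
    with t hb hTt ht1
  have hT0 : 0 < T := (hT T le_rfl).2
  have hbound : c * (log t - log T) ≤ ∫ y in T..t, f y := by
    have hinv : IntervalIntegrable (fun y => c * y⁻¹) volume T t :=
      (intervalIntegral.intervalIntegrable_inv
        (fun y hy => ((uIcc_of_le hTt ▸ hy).1.trans_lt' hT0).ne') continuousOn_id).const_mul c
    calc c * (log t - log T) = ∫ y in T..t, c * y⁻¹ := by
          rw [intervalIntegral.integral_const_mul, integral_inv_of_pos hT0 (hT0.trans_le hTt),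
            log_div (hT0.trans_le hTt).ne' hT0.ne']
      _ ≤ ∫ y in T..t, f y := by
          refine intervalIntegral.integral_mono_on hTt hinv (hf T t) fun y hy => ?_
          obtain ⟨hcy, hy0⟩ := hT y hy.1
          rw [← div_eq_mul_inv, div_le_iff₀ hy0]
          linarith
  have hlog : 0 < log t := log_pos ht1
  calc b < K * (log t)⁻¹ + c := hb
    _ = ((∫ y in a..T, f y) + c * (log t - log T)) / log t := by
        field_simp
        ring
    _ ≤ (∫ y in a..t, f y) / log t := by
        rw [← intervalIntegral.integral_add_adjacent_intervals (hf a T) (hf T t)]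
        gcongr

lemma tendsto_intervalIntegral_div_log (hf : ∀ u v, IntervalIntegrable f volume u v)
    (h : Tendsto (fun y => y * f y) atTop (𝓝 b)) :
    Tendsto (fun t => (∫ y in a..t, f y) / log t) atTop (𝓝 b) := by
  refine tendsto_order.2 ⟨fun b' hb' => ?_, fun b' hb' => ?_⟩
  · obtain ⟨c, hb'c, hcb⟩ := exists_between hb'
    exact eventually_lt_intervalIntegral_div_log hf (h.eventually_const_le hcb) hb'c
  · obtain ⟨c, hbc, hcb'⟩ := exists_between hb'
    have hneg := eventually_lt_intervalIntegral_div_log (f := fun y => -f y) (a := a)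
      (fun u v => (hf u v).neg)
      ((h.eventually_le_const hbc).mono fun y hy => by linarith [mul_neg y (f y)]) (neg_lt_neg hcb')
    filter_upwards [hneg] with t ht
    rw [intervalIntegral.integral_neg, neg_div] at ht
    exact neg_lt_neg_iff.1 ht

end LogAverage

lemma one_sub_exp_neg_mul_div_le_min {s x : ℝ} (hs : 0 < s) :
    (1 - exp (-(s * x))) / s ≤ min x s⁻¹ := by
  refine le_min ?_ ?_
  · rw [div_le_iff₀ hs]
    linarith [add_one_le_exp (-(s * x))]
  · rw [inv_eq_one_div]
    gcongr
    linarith [exp_pos (-(s * x))]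

lemma exp_neg_mul_le_one_sub_exp_neg_mul_div {a s x : ℝ} (hs : 0 < s) (hx : 0 ≤ x)
    (hxa : s * x ≤ a) : exp (-a) * x ≤ (1 - exp (-(s * x))) / s := by
  have hsx : (1 + s * x) * exp (-(s * x)) ≤ 1 := by
    calc (1 + s * x) * exp (-(s * x)) ≤ exp (s * x) * exp (-(s * x)) := by
          gcongr
          linarith [add_one_le_exp (s * x)]
      _ = 1 := by rw [← exp_add, add_neg_cancel, exp_zero]
  rw [le_div_iff₀ hs]
  calc exp (-a) * x * s ≤ exp (-(s * x)) * (s * x) := by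
        rw [mul_assoc, mul_comm x]
        gcongr
    _ ≤ 1 - exp (-(s * x)) := by linarith

section Tail

variable {P : Measure Ω} [IsFiniteMeasure P] {X : Ω → ℝ}

lemma antitone_toReal_measure_lt : Antitone fun y : ℝ => (P {ω | y < X ω}).toReal :=
  fun _ _ hyz => ENNReal.toReal_mono (measure_ne_top _ _)
    (measure_mono fun _ h => hyz.trans_lt h)

lemma integrable_of_forall_mem_Icc {f : Ω → ℝ} {t : ℝ} (hf : Measurable f)
    (hft : ∀ ω, f ω ∈ Icc 0 t) : Integrable f P :=
  .of_bound hf.aestronglyMeasurable t <| ae_of_all _ fun ω => by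
    rw [Real.norm_eq_abs, abs_of_nonneg (hft ω).1]
    exact (hft ω).2

lemma integrable_exp_neg_mul (hXm : Measurable X) (hX0 : ∀ ω, 0 ≤ X ω) {s : ℝ} (hs : 0 ≤ s) :
    Integrable (fun ω => exp (-(s * X ω))) P :=
  integrable_of_forall_mem_Icc (t := 1) (hXm.const_mul s).neg.exp
    fun ω => ⟨(exp_pos _).le, exp_le_one_iff.2 (neg_nonpos.2 (mul_nonneg hs (hX0 ω)))⟩

lemma integrable_ite_le (hXm : Measurable X) (hX0 : ∀ ω, 0 ≤ X ω) {t : ℝ} (ht : 0 ≤ t) :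
    Integrable (fun ω => if X ω ≤ t then X ω else 0) P :=
  integrable_of_forall_mem_Icc (t := t)
    (Measurable.ite (measurableSet_le hXm measurable_const) hXm measurable_const)
    fun ω => by split_ifs with h <;> simp [h, hX0 ω, ht]

lemma integrable_min_const (hXm : Measurable X) (hX0 : ∀ ω, 0 ≤ X ω) {t : ℝ} (ht : 0 ≤ t) :
    Integrable (fun ω => min (X ω) t) P :=
  integrable_of_forall_mem_Icc (hXm.min measurable_const)
    fun ω => ⟨le_min (hX0 ω) ht, min_le_right _ _⟩

lemma integral_min_eq_GStar (hXm : Measurable X) (hX0 : ∀ ω, 0 ≤ X ω) {t : ℝ} (ht : 0 ≤ t) :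
    ∫ ω, min (X ω) t ∂P = GStar P X t := by
  rw [(integrable_min_const hXm hX0 ht).integral_eq_integral_meas_lt
      (ae_of_all _ fun ω => le_min (hX0 ω) ht),
    setIntegral_eq_of_subset_of_forall_sdiff_eq_zero (s := Ioo 0 t) measurableSet_Ioi
      Ioo_subset_Ioi_self, GStar, intervalIntegral.integral_of_le ht, integral_Ioc_eq_integral_Ioo]
  · refine setIntegral_congr_fun measurableSet_Ioo fun y hy => ?_
    simp [measureReal_def, hy.2]
  · intro y ⟨hy0, hyt⟩
    have hty : t ≤ y := le_of_not_gt fun h => hyt ⟨hy0, h⟩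
    simp [measureReal_def, hty.not_gt]

lemma integral_min_eq_HStar_add (hXm : Measurable X) (hX0 : ∀ ω, 0 ≤ X ω) {t : ℝ} (ht : 0 ≤ t) :
    ∫ ω, min (X ω) t ∂P = HStar P X t + t * (P {ω | t < X ω}).toReal := by
  have hsplit : (fun ω => min (X ω) t)
      = fun ω => (if X ω ≤ t then X ω else 0) + {ω | t < X ω}.indicator (fun _ => t) ω := by
    ext ω
    by_cases h : X ω ≤ t
    · simp [h, not_lt.2 h]
    · simp [h, min_eq_right (not_le.1 h).le, not_le.1 h]
  have hmeas : MeasurableSet {ω | t < X ω} := hXm measurableSet_Ioi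
  rw [hsplit, integral_add, integral_indicator_const t hmeas, HStar, measureReal_def, smul_eq_mul,
    mul_comm]
  · exact integrable_ite_le hXm hX0 ht
  · exact (integrable_const t).indicator hmeas

lemma HStar_eq_GStar_sub (hXm : Measurable X) (hX0 : ∀ ω, 0 ≤ X ω) {t : ℝ} (ht : 0 ≤ t) :
    HStar P X t = GStar P X t - t * (P {ω | t < X ω}).toReal :=
  eq_sub_of_add_eq ((integral_min_eq_HStar_add hXm hX0 ht).symm.trans
    (integral_min_eq_GStar hXm hX0 ht))

lemma psiStar_eq_integral [IsProbabilityMeasure P] (hXm : Measurable X) (hX0 : ∀ ω, 0 ≤ X ω)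
    {s : ℝ} (hs : 0 ≤ s) : psiStar P X s = ∫ ω, (1 - exp (-(s * X ω))) / s ∂P := by
  rw [psiStar, integral_div, integral_sub (integrable_const 1) (integrable_exp_neg_mul hXm hX0 hs)]
  simp

lemma psiStar_le_GStar_inv [IsProbabilityMeasure P] (hXm : Measurable X) (hX0 : ∀ ω, 0 ≤ X ω)
    {s : ℝ} (hs : 0 < s) : psiStar P X s ≤ GStar P X s⁻¹ := by
  rw [psiStar_eq_integral hXm hX0 hs.le, ← integral_min_eq_GStar hXm hX0 (inv_nonneg.2 hs.le)]
  exact integral_mono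
    (((integrable_const 1).sub (integrable_exp_neg_mul hXm hX0 hs.le)).div_const s)
    (integrable_min_const hXm hX0 (inv_nonneg.2 hs.le)) fun ω => one_sub_exp_neg_mul_div_le_min hs

lemma exp_neg_mul_HStar_le_psiStar [IsProbabilityMeasure P] (hXm : Measurable X)
    (hX0 : ∀ ω, 0 ≤ X ω) {a s : ℝ} (ha : 0 ≤ a) (hs : 0 < s) :
    exp (-a) * HStar P X (a / s) ≤ psiStar P X s := by
  rw [psiStar_eq_integral hXm hX0 hs.le, HStar, ← integral_const_mul]
  refine integral_mono ((integrable_ite_le hXm hX0 (div_nonneg ha hs.le)).const_mul _)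
    (((integrable_const 1).sub (integrable_exp_neg_mul hXm hX0 hs.le)).div_const s) fun ω => ?_
  split_ifs with h
  · exact exp_neg_mul_le_one_sub_exp_neg_mul_div hs (hX0 ω) (by rwa [le_div_iff₀' hs] at h)
  · rw [mul_zero]
    exact div_nonneg (sub_nonneg.2 (exp_le_one_iff.2 (neg_nonpos.2 (mul_nonneg hs.le (hX0 ω)))))
      hs.le

end Tail

lemma tendsto_comp_const_mul_div_log {g : ℝ → ℝ} {a b : ℝ} (ha : 0 < a)
    (h : Tendsto (fun t => g t / log t) atTop (𝓝 b)) :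
    Tendsto (fun t => g (a * t) / log t) atTop (𝓝 b) := by
  have hat : Tendsto (fun t => a * t) atTop atTop := tendsto_id.const_mul_atTop ha
  have hratio : Tendsto (fun t => log (a * t) / log t) atTop (𝓝 1) := by
    have : Tendsto (fun t => log a * (log t)⁻¹ + 1) atTop (𝓝 1) := by
      simpa using (tendsto_log_atTop.inv_tendsto_atTop.const_mul (log a)).add_const 1
    refine this.congr' ?_
    filter_upwards [eventually_gt_atTop 1] with t ht
    rw [log_mul ha.ne' (by linarith), add_div, div_self (log_pos ht).ne', div_eq_mul_inv]
  have := (h.comp hat).mul hratio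
  rw [mul_one] at this
  refine this.congr' ?_
  filter_upwards [hat.eventually_gt_atTop 1] with t ht
  exact div_mul_div_cancel₀ (log_pos ht).ne'

lemma Filter.Tendsto.div_const_mul_of_div {α : Type*} {l : Filter α} {f g : α → ℝ} {b : ℝ}
    (hb : b ≠ 0) (h : Tendsto (fun x => f x / g x) l (𝓝 b)) :
    Tendsto (fun x => f x / (b * g x)) l (𝓝 1) := by
  simpa [div_mul_eq_div_div_swap, div_self hb] using h.div_const b

section Asymptotics

variable {P : Measure Ω} {X : Ω → ℝ} {b : ℝ}

lemma tendsto_HStar_div_log [IsFiniteMeasure P] (hXm : Measurable X) (hX0 : ∀ ω, 0 ≤ X ω)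
    (hG : Tendsto (fun t => GStar P X t / log t) atTop (𝓝 b)) {c : ℝ}
    (htail : Tendsto (fun t : ℝ => t * (P {ω | t < X ω}).toReal) atTop (𝓝 c)) :
    Tendsto (fun t => HStar P X t / log t) atTop (𝓝 b) := by
  have := hG.sub (htail.div_atTop tendsto_log_atTop)
  rw [sub_zero] at this
  refine this.congr' ?_
  filter_upwards [eventually_ge_atTop 0] with t ht
  rw [← sub_div, HStar_eq_GStar_sub hXm hX0 ht]

lemma tendsto_psiStar_one_div_div_log [IsProbabilityMeasure P] (hXm : Measurable X)
    (hX0 : ∀ ω, 0 ≤ X ω) (hG : Tendsto (fun t => GStar P X t / log t) atTop (𝓝 b))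
    (hH : Tendsto (fun t => HStar P X t / log t) atTop (𝓝 b)) :
    Tendsto (fun t => psiStar P X (1 / t) / log t) atTop (𝓝 b) := by
  refine tendsto_order.2 ⟨fun b' hb' => ?_, fun b' hb' => ?_⟩
  · have hcont : Tendsto (fun a => exp (-a) * b) (𝓝[>] 0) (𝓝 b) := by
      have : Continuous fun a => exp (-a) * b := by fun_prop
      simpa using (this.tendsto 0).mono_left nhdsWithin_le_nhds
    obtain ⟨a, hab, ha⟩ := ((hcont.eventually_const_lt hb').and self_mem_nhdsWithin).exists
    have hlow :=
      ((tendsto_comp_const_mul_div_log ha hH).const_mul (exp (-a))).eventually_const_lt hab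
    filter_upwards [hlow, eventually_gt_atTop 1] with t h ht
    calc b' < exp (-a) * (HStar P X (a / (1 / t)) / log t) := by rwa [one_div, div_inv_eq_mul]
      _ ≤ psiStar P X (1 / t) / log t := by
          rw [← mul_div_assoc]
          gcongr
          · exact log_pos ht |>.le
          · exact exp_neg_mul_HStar_le_psiStar hXm hX0 ha.le (by positivity)
  · filter_upwards [hG.eventually_lt_const hb', eventually_gt_atTop 1] with t h ht
    calc psiStar P X (1 / t) / log t ≤ GStar P X (1 / t)⁻¹ / log t := by
          gcongr
          · exact log_pos ht |>.le
          · exact psiStar_le_GStar_inv hXm hX0 (by positivity)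
      _ < b' := by rwa [one_div, inv_inv]

end Asymptotics

/-- if `t·P{X > t} → b > 0`, then
`ψ*(1/t) ~ G*(t) ~ H*(t) ~ b log t` as `t → ∞`. -/
theorem tail_laplace_log_asymptotics (P : Measure Ω) [IsProbabilityMeasure P]
    (X : Ω → ℝ) (hXm : Measurable X) (hX0 : ∀ ω, 0 ≤ X ω) (b : ℝ) (hb : 0 < b)
    (htail : Tendsto (fun t : ℝ => t * (P {ω | t < X ω}).toReal) atTop (nhds b)) :
    Tendsto (fun t : ℝ => psiStar P X (1 / t) / (b * Real.log t)) atTop (nhds 1) ∧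
    Tendsto (fun t : ℝ => GStar P X t / (b * Real.log t)) atTop (nhds 1) ∧
    Tendsto (fun t : ℝ => HStar P X t / (b * Real.log t)) atTop (nhds 1) := by
  have hG : Tendsto (fun t => GStar P X t / log t) atTop (𝓝 b) :=
    tendsto_intervalIntegral_div_log (fun _ _ => antitone_toReal_measure_lt.intervalIntegrable)
      htail
  have hH := tendsto_HStar_div_log hXm hX0 hG htail
  exact ⟨(tendsto_psiStar_one_div_div_log hXm hX0 hG hH).div_const_mul_of_div hb.ne',
    hG.div_const_mul_of_div hb.ne', hH.div_const_mul_of_div hb.ne'⟩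

end
end

section
/- Let t : [0,∞) → [0,∞). Assume that σ̲_t(h₀) < ∞ for some h₀ > 0 and that, for some a ≥ 0, the function x ↦ e^{−ax} t(x) is nonincreasing on [0,∞). Then t is directly Riemann integrable on ℝ⁺. -/
open Filter ENNReal

noncomputable section

/-- Upper Riemann sum `σ̄_t(h)` over `[0,∞)`, valued in `ℝ≥0∞`. -/
def upperSum (t : ℝ → ℝ) (h : ℝ) : ℝ≥0∞ :=
  ENNReal.ofReal h *
    ∑' n : ℕ, ⨆ y ∈ Set.Ico ((n : ℝ) * h) (((n : ℝ) + 1) * h), ENNReal.ofReal (t y)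

/-- Lower Riemann sum `σ̲_t(h)` over `[0,∞)`, valued in `ℝ≥0∞`. -/
def lowerSum (t : ℝ → ℝ) (h : ℝ) : ℝ≥0∞ :=
  ENNReal.ofReal h *
    ∑' n : ℕ, ⨅ y ∈ Set.Ico ((n : ℝ) * h) (((n : ℝ) + 1) * h), ENNReal.ofReal (t y)

/-- Direct Riemann integrability on `ℝ⁺`. -/
def DRI (t : ℝ → ℝ) : Prop :=
  (∀ h > 0, upperSum t h ≠ ⊤) ∧
    Tendsto (fun h => upperSum t h - lowerSum t h) (nhdsWithin 0 (Set.Ioi 0)) (nhds 0)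

/-!
Write `t x = e^{a x} g x` with `g` nonincreasing. Every point of the `(n+1)`-st cell lies at most
`2h` to the right of every point of the `n`-th one, so the supremum of `t` over the former is at
most `e^{2ah}` times its infimum over the latter; hence `σ̄_t(h) ≤ h e^{ah} t(0) + e^{2ah} σ̲_t(h)`.
As `σ̲_t(h) ≤ ∫₀^∞ t ≤ σ̄_t(h)`, taking `h = h₀` shows that the integral is finite, and then
`σ̄_t(h) - σ̲_t(h) ≤ h e^{ah} t(0) + (e^{2ah} - 1) ∫₀^∞ t → 0`.
-/

open Set MeasureTheory Topology

namespace RiemannSum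

def cell (h : ℝ) (n : ℕ) : Set ℝ := Ico ((n : ℝ) * h) (((n : ℝ) + 1) * h)

lemma upperSum_eq_tsum_iSup_cell (t : ℝ → ℝ) (h : ℝ) :
    upperSum t h = ENNReal.ofReal h * ∑' n, ⨆ y ∈ cell h n, ENNReal.ofReal (t y) := rfl

lemma lowerSum_eq_tsum_iInf_cell (t : ℝ → ℝ) (h : ℝ) :
    lowerSum t h = ENNReal.ofReal h * ∑' n, ⨅ y ∈ cell h n, ENNReal.ofReal (t y) := rfl

lemma cell_eq_Ico_succ (h : ℝ) (n : ℕ) :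
    cell h n = Ico ((n : ℝ) * h) ((Order.succ n : ℕ) * h) := by
  simp [cell]

lemma volume_cell (h : ℝ) (n : ℕ) : volume (cell h n) = ENNReal.ofReal h := by
  rw [cell, Real.volume_Ico]
  ring_nf

lemma measurableSet_cell (h : ℝ) (n : ℕ) : MeasurableSet (cell h n) := measurableSet_Ico

variable {h : ℝ}

lemma nonneg_of_mem_cell (hh : 0 ≤ h) {n : ℕ} {y : ℝ} (hy : y ∈ cell h n) : 0 ≤ y :=
  (mul_nonneg n.cast_nonneg hh).trans hy.1

lemma iUnion_cell (hh : 0 < h) : ⋃ n, cell h n = Ici 0 := by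
  simp_rw [cell_eq_Ico_succ]
  convert iUnion_Ico_map_succ_eq_Ici (f := fun k : ℕ => (k : ℝ) * h) (fun k => ?_) ?_ using 1
  · simp
  · simp only [bot_eq_zero', Nat.cast_zero, zero_mul]
    positivity
  · rw [not_bddAbove_iff]
    intro x
    obtain ⟨n, hn⟩ := exists_nat_gt (x / h)
    exact ⟨n * h, ⟨n, rfl⟩, (div_lt_iff₀ hh).1 hn⟩

lemma pairwise_disjoint_cell (hh : 0 ≤ h) : Pairwise (Function.onFun Disjoint (cell h)) := by
  rw [show cell h = _ from funext (cell_eq_Ico_succ h)]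
  exact Monotone.pairwise_disjoint_on_Ico_succ fun m n hmn => by gcongr

lemma lintegral_Ici_eq_tsum_cell (hh : 0 < h) (f : ℝ → ℝ≥0∞) :
    ∫⁻ y in Ici 0, f y = ∑' n, ∫⁻ y in cell h n, f y := by
  rw [← iUnion_cell hh, lintegral_iUnion (measurableSet_cell h) (pairwise_disjoint_cell hh.le)]

lemma lintegral_le_upperSum (t : ℝ → ℝ) (hh : 0 < h) :
    ∫⁻ y in Ici 0, ENNReal.ofReal (t y) ≤ upperSum t h := by
  rw [lintegral_Ici_eq_tsum_cell hh, upperSum_eq_tsum_iSup_cell, ← ENNReal.tsum_mul_left]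
  refine ENNReal.tsum_le_tsum fun n => ?_
  calc ∫⁻ y in cell h n, ENNReal.ofReal (t y)
      ≤ ∫⁻ _ in cell h n, ⨆ y ∈ cell h n, ENNReal.ofReal (t y) :=
        setLIntegral_mono' (measurableSet_cell h n) fun _ hy =>
          le_biSup (fun y => ENNReal.ofReal (t y)) hy
    _ = _ := by rw [setLIntegral_const, volume_cell, mul_comm]

lemma lowerSum_le_lintegral (t : ℝ → ℝ) (hh : 0 < h) :
    lowerSum t h ≤ ∫⁻ y in Ici 0, ENNReal.ofReal (t y) := by
  rw [lintegral_Ici_eq_tsum_cell hh, lowerSum_eq_tsum_iInf_cell, ← ENNReal.tsum_mul_left]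
  refine ENNReal.tsum_le_tsum fun n => ?_
  calc ENNReal.ofReal h * ⨅ y ∈ cell h n, ENNReal.ofReal (t y)
      = ∫⁻ _ in cell h n, ⨅ y ∈ cell h n, ENNReal.ofReal (t y) := by
        rw [setLIntegral_const, volume_cell, mul_comm]
    _ ≤ _ := setLIntegral_mono_ae' (measurableSet_cell h n) (ae_of_all _ fun y hy => iInf₂_le y hy)

section ExpAntitone

variable {t : ℝ → ℝ} {a : ℝ}

lemma le_exp_mul_sub_mul_of_antitoneOn
    (hmono : AntitoneOn (fun x => Real.exp (-(a * x)) * t x) (Ici 0))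
    {x y : ℝ} (hx : 0 ≤ x) (hxy : x ≤ y) : t y ≤ Real.exp (a * (y - x)) * t x := by
  calc t y = Real.exp (a * y) * (Real.exp (-(a * y)) * t y) := by
        rw [← mul_assoc, ← Real.exp_add, add_neg_cancel, Real.exp_zero, one_mul]
    _ ≤ Real.exp (a * y) * (Real.exp (-(a * x)) * t x) :=
        mul_le_mul_of_nonneg_left (hmono hx (hx.trans hxy) hxy) (Real.exp_pos _).le
    _ = Real.exp (a * (y - x)) * t x := by
        rw [← mul_assoc, ← Real.exp_add]
        ring_nf

lemma ofReal_le_exp_mul_ofReal_of_antitoneOn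
    (hmono : AntitoneOn (fun x => Real.exp (-(a * x)) * t x) (Ici 0)) (ha : 0 ≤ a)
    {x y d : ℝ} (hx : 0 ≤ x) (hxy : x ≤ y) (hyd : y ≤ x + d) :
    ENNReal.ofReal (t y) ≤ ENNReal.ofReal (Real.exp (a * d)) * ENNReal.ofReal (t x) := by
  calc ENNReal.ofReal (t y) ≤ ENNReal.ofReal (Real.exp (a * (y - x)) * t x) :=
        ENNReal.ofReal_le_ofReal (le_exp_mul_sub_mul_of_antitoneOn hmono hx hxy)
    _ = ENNReal.ofReal (Real.exp (a * (y - x))) * ENNReal.ofReal (t x) :=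
        ENNReal.ofReal_mul (Real.exp_pos _).le
    _ ≤ ENNReal.ofReal (Real.exp (a * d)) * ENNReal.ofReal (t x) := by
        gcongr
        linarith

lemma iSup_cell_zero_le_of_antitoneOn
    (hmono : AntitoneOn (fun x => Real.exp (-(a * x)) * t x) (Ici 0)) (ha : 0 ≤ a) :
    ⨆ y ∈ cell h 0, ENNReal.ofReal (t y) ≤
      ENNReal.ofReal (Real.exp (a * h)) * ENNReal.ofReal (t 0) := by
  refine iSup₂_le fun y hy => ?_
  simp only [cell, Nat.cast_zero, zero_mul, zero_add, one_mul, mem_Ico] at hy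
  exact ofReal_le_exp_mul_ofReal_of_antitoneOn hmono ha le_rfl hy.1 (by linarith)

lemma iSup_cell_succ_le_of_antitoneOn
    (hmono : AntitoneOn (fun x => Real.exp (-(a * x)) * t x) (Ici 0)) (ha : 0 ≤ a)
    (hh : 0 ≤ h) (n : ℕ) :
    ⨆ y ∈ cell h (n + 1), ENNReal.ofReal (t y) ≤
      ENNReal.ofReal (Real.exp (a * (2 * h))) * ⨅ x ∈ cell h n, ENNReal.ofReal (t x) := by
  have hc₀ : ENNReal.ofReal (Real.exp (a * (2 * h))) ≠ 0 := by simp [Real.exp_pos]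
  refine iSup₂_le fun y hy => ?_
  simp only [ENNReal.mul_iInf_of_ne hc₀ ENNReal.ofReal_ne_top]
  refine le_iInf₂ fun x hx => ?_
  simp only [cell, mem_Ico, Nat.cast_succ] at hx hy
  exact ofReal_le_exp_mul_ofReal_of_antitoneOn hmono ha (nonneg_of_mem_cell hh hx)
    (by linarith) (by linarith)

lemma upperSum_le_of_antitoneOn
    (hmono : AntitoneOn (fun x => Real.exp (-(a * x)) * t x) (Ici 0)) (ha : 0 ≤ a)
    (hh : 0 ≤ h) :
    upperSum t h ≤ ENNReal.ofReal (h * Real.exp (a * h)) * ENNReal.ofReal (t 0) +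
      ENNReal.ofReal (Real.exp (a * (2 * h))) * lowerSum t h := by
  rw [upperSum_eq_tsum_iSup_cell, lowerSum_eq_tsum_iInf_cell,
    tsum_eq_zero_add' ENNReal.summable, mul_add, ENNReal.ofReal_mul hh, mul_assoc,
    ← ENNReal.tsum_mul_left, ← ENNReal.tsum_mul_left, ← ENNReal.tsum_mul_left]
  refine add_le_add ?_ (ENNReal.tsum_le_tsum fun n => ?_)
  · gcongr
    exact iSup_cell_zero_le_of_antitoneOn hmono ha
  · rw [mul_left_comm]
    gcongr
    exact iSup_cell_succ_le_of_antitoneOn hmono ha hh n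

end ExpAntitone

lemma tsub_le_add_tsub_one_mul {u l A c I : ℝ≥0∞} (hu : u ≤ A + c * l) (hl : l ≤ I)
    (hc : 1 ≤ c) : u - l ≤ A + (c - 1) * I := by
  rw [tsub_le_iff_right]
  calc u ≤ A + c * l := hu
    _ = A + (c - 1) * l + l := by
        rw [add_assoc, ← add_one_mul (c - 1), tsub_add_cancel_of_le hc]
    _ ≤ A + (c - 1) * I + l := by gcongr

lemma tendsto_upperSum_sub_lowerSum_bound (a t₀ : ℝ) {I : ℝ≥0∞} (hI : I ≠ ⊤) :
    Tendsto (fun h : ℝ => ENNReal.ofReal (h * Real.exp (a * h)) * ENNReal.ofReal t₀ +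
      (ENNReal.ofReal (Real.exp (a * (2 * h))) - 1) * I) (𝓝 0) (𝓝 0) := by
  have hA : Tendsto (fun h : ℝ => ENNReal.ofReal (h * Real.exp (a * h))) (𝓝 0) (𝓝 0) :=
    (ENNReal.continuous_ofReal.comp (by fun_prop)).tendsto' _ _ (by simp)
  have hc : Tendsto (fun h : ℝ => ENNReal.ofReal (Real.exp (a * (2 * h))) - 1) (𝓝 0) (𝓝 0) :=
    ((ENNReal.continuous_sub_right 1).comp (ENNReal.continuous_ofReal.comp (by fun_prop))).tendsto'
      _ _ (by simp)
  simpa using (ENNReal.Tendsto.mul_const hA (Or.inr ENNReal.ofReal_ne_top)).add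
    (ENNReal.Tendsto.mul_const hc (Or.inr hI))

end RiemannSum

open RiemannSum

theorem dri_of_lowerSum_finite_general (t : ℝ → ℝ)
    (h₀ : ℝ) (hh₀ : 0 < h₀) (hlow : lowerSum t h₀ ≠ ⊤)
    (a : ℝ) (ha : 0 ≤ a)
    (hmono : AntitoneOn (fun x => Real.exp (-(a * x)) * t x) (Set.Ici 0)) :
    DRI t := by
  set I := ∫⁻ y in Ici 0, ENNReal.ofReal (t y)
  have hupper (h : ℝ) (hh : 0 < h) := upperSum_le_of_antitoneOn hmono ha hh.le
  have hI : I ≠ ⊤ := by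
    refine ne_top_of_le_ne_top ?_ ((lintegral_le_upperSum t hh₀).trans (hupper h₀ hh₀))
    finiteness
  refine ⟨fun h hh => ne_top_of_le_ne_top ?_ ((hupper h hh).trans
    (add_le_add le_rfl (mul_le_mul' le_rfl (lowerSum_le_lintegral t hh)))), ?_⟩
  · finiteness
  refine tendsto_of_tendsto_of_tendsto_of_le_of_le' tendsto_const_nhds
    ((tendsto_upperSum_sub_lowerSum_bound a (t 0) hI).mono_left nhdsWithin_le_nhds)
    (Eventually.of_forall fun _ => zero_le) ?_
  filter_upwards [self_mem_nhdsWithin] with h (hh : 0 < h)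
  exact tsub_le_add_tsub_one_mul (hupper h hh) (lowerSum_le_lintegral t hh)
    (by simpa using Real.one_le_exp (by positivity))

/-- if `σ̲_t(h₀) < ∞` for some `h₀ > 0` and `x ↦ e^{-ax} t(x)` is
nonincreasing on `[0,∞)` for some `a ≥ 0`, then `t` is directly Riemann integrable
on `ℝ⁺`. -/
theorem dri_of_lowerSum_finite (t : ℝ → ℝ) (ht0 : ∀ x, 0 ≤ x → 0 ≤ t x)
    (h₀ : ℝ) (hh₀ : 0 < h₀) (hlow : lowerSum t h₀ ≠ ⊤)
    (a : ℝ) (ha : 0 ≤ a)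
    (hmono : AntitoneOn (fun x => Real.exp (-(a * x)) * t x) (Set.Ici 0)) :
    DRI t :=
  dri_of_lowerSum_finite_general t h₀ hh₀ hlow a ha hmono
end
end

section
/- Let t : [0,∞) → [0,∞) be measurable and assume that sup_{x ≥ 0} ∫_{[0,∞)} t(x+y) dV*(y) < ∞. Then ∫₀^∞ t(y) dy < ∞ (t is Lebesgue integrable on [0,∞)). -/
/-!
Put `u x = ∫ t (x + y) dV*(y)`, so `u ≤ C` on `[0, ∞)`. Since `V* = δ₀ + V* ∗ F` with `F` the jump
law, `u` solves the renewal equation `u x = t x + E u (x + η)`. Integrating over `[0, A)` gives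
`∫_{[0,A)} u = ∫_{[0,A)} t + E ∫_{[0,A)} u (x + η) dx`, while shifting the window by `η` costs at most
`C η`, so `∫_{[0,A)} u ≤ E ∫_{[0,A)} u (x + η) dx + C E η`. The common term is finite because
`u ≤ C`, hence `∫_{[0,A)} t ≤ C E η` for every `A`, and monotone convergence finishes.
-/

open MeasureTheory ProbabilityTheory Filter ENNReal NNReal

noncomputable section

variable {Ω : Type*} [MeasurableSpace Ω]

/-- The random walk `S*_n = η₁ + ⋯ + η_n` started at `0`. -/
def rwalk (η : ℕ → Ω → ℝ) (n : ℕ) (ω : Ω) : ℝ :=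
  ∑ i ∈ Finset.range n, η i ω

/-- The renewal measure `V*(A) = Σ_n P{S*_n ∈ A}`, so that `∫ · dV*` is the
Lebesgue–Stieltjes integral with respect to the renewal function `V*`. -/
def renewalMeasure (P : Measure Ω) (η : ℕ → Ω → ℝ) : Measure ℝ :=
  Measure.sum fun n : ℕ => P.map (rwalk η n)

/-- Standing assumptions for a standard renewal process: i.i.d. nonnegative jumps with
finite positive mean and nonarithmetic distribution. -/
structure RenewalSetup (P : Measure Ω) (η : ℕ → Ω → ℝ) : Prop where
  meas : ∀ i, Measurable (η i)
  indep : iIndepFun η P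
  ident : ∀ i, P.map (η i) = P.map (η 0)
  nonneg : ∀ i, ∀ᵐ ω ∂P, 0 ≤ η i ω
  int : Integrable (η 0) P
  mean_pos : 0 < ∫ ω, η 0 ω ∂P
  nonarith : ∀ d : ℝ, 0 < d → P {ω | ∃ k : ℤ, η 0 ω = d * k} ≠ 1

open Set

section RenewalInequality

variable {u f : ℝ → ℝ≥0∞} {C : ℝ≥0∞}

theorem setLIntegral_Ico_zero_le_mul (huC : ∀ x, 0 ≤ x → u x ≤ C) (b : ℝ) :
    ∫⁻ x in Ico 0 b, u x ≤ C * ENNReal.ofReal b :=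
  calc ∫⁻ x in Ico 0 b, u x ≤ ∫⁻ _ in Ico 0 b, C :=
        setLIntegral_mono' measurableSet_Ico fun x hx => huC x hx.1
    _ = C * ENNReal.ofReal b := by rw [setLIntegral_const, Real.volume_Ico, sub_zero]

theorem setLIntegral_Ico_le_shift (huC : ∀ x, 0 ≤ x → u x ≤ C) {e : ℝ} (he : 0 ≤ e) (A : ℝ) :
    ∫⁻ x in Ico 0 A, u x ≤ (∫⁻ x in Ico 0 A, u (x + e)) + C * ENNReal.ofReal e := by
  have hshift : ∫⁻ x in Ico 0 A, u (x + e) = ∫⁻ x in Ico e (A + e), u x := by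
    have := (measurePreserving_add_right volume e).setLIntegral_comp_preimage_emb
      (measurableEmbedding_addRight e) u (Ico e (A + e))
    rwa [preimage_add_const_Ico, sub_self, add_sub_cancel_right] at this
  calc ∫⁻ x in Ico 0 A, u x ≤ ∫⁻ x in Ico 0 e ∪ Ico e (A + e), u x := by
        refine lintegral_mono_set fun x hx => ?_
        rcases lt_or_ge x e with hxe | hxe
        · exact Or.inl ⟨hx.1, hxe⟩
        · exact Or.inr ⟨hxe, hx.2.trans_le (le_add_of_nonneg_right he)⟩
    _ ≤ (∫⁻ x in Ico 0 e, u x) + ∫⁻ x in Ico e (A + e), u x := lintegral_union_le u _ _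
    _ ≤ C * ENNReal.ofReal e + ∫⁻ x in Ico e (A + e), u x := by
        gcongr
        exact setLIntegral_Ico_zero_le_mul huC e
    _ = (∫⁻ x in Ico 0 A, u (x + e)) + C * ENNReal.ofReal e := by rw [hshift, add_comm]

variable {ν : Measure ℝ} [IsProbabilityMeasure ν]

theorem setLIntegral_Ico_le_of_renewal_eq (hν : ∀ᵐ e ∂ν, 0 ≤ e) (hf : Measurable f)
    (hu : Measurable u) (hC : C ≠ ⊤) (huC : ∀ x, 0 ≤ x → u x ≤ C)
    (hren : ∀ x, 0 ≤ x → u x = f x + ∫⁻ e, u (x + e) ∂ν) (A : ℝ) :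
    ∫⁻ x in Ico 0 A, f x ≤ C * ∫⁻ e, ENNReal.ofReal e ∂ν := by
  set J := ∫⁻ e, (∫⁻ x in Ico 0 A, u (x + e)) ∂ν
  have hsplit : ∫⁻ x in Ico 0 A, u x = (∫⁻ x in Ico 0 A, f x) + J := by
    rw [setLIntegral_congr_fun measurableSet_Ico fun x hx => hren x hx.1,
      lintegral_add_left hf,
      lintegral_lintegral_swap (f := fun x e => u (x + e))
        (hu.comp (measurable_fst.add measurable_snd)).aemeasurable]
  have hbound : ∫⁻ x in Ico 0 A, u x ≤ J + C * ∫⁻ e, ENNReal.ofReal e ∂ν :=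
    calc ∫⁻ x in Ico 0 A, u x = ∫⁻ _, (∫⁻ x in Ico 0 A, u x) ∂ν := by simp
      _ ≤ ∫⁻ e, ((∫⁻ x in Ico 0 A, u (x + e)) + C * ENNReal.ofReal e) ∂ν :=
          lintegral_mono_ae (hν.mono fun e he => setLIntegral_Ico_le_shift huC he A)
      _ = J + C * ∫⁻ e, ENNReal.ofReal e ∂ν := by
          rw [lintegral_add_right _ (ENNReal.measurable_ofReal.const_mul C),
            lintegral_const_mul _ ENNReal.measurable_ofReal]
  have hJ : J ≠ ⊤ := by
    refine ne_top_of_le_ne_top (mul_ne_top hC (ofReal_ne_top (r := A))) ?_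
    calc J ≤ ∫⁻ x in Ico 0 A, u x := hsplit ▸ le_add_self
      _ ≤ C * ENNReal.ofReal A := setLIntegral_Ico_zero_le_mul huC A
  rwa [← ENNReal.add_le_add_iff_right hJ, ← hsplit, add_comm]

theorem setLIntegral_Ici_le_of_renewal_eq (hν : ∀ᵐ e ∂ν, 0 ≤ e) (hf : Measurable f)
    (hu : Measurable u) (hC : C ≠ ⊤) (huC : ∀ x, 0 ≤ x → u x ≤ C)
    (hren : ∀ x, 0 ≤ x → u x = f x + ∫⁻ e, u (x + e) ∂ν) :
    ∫⁻ x in Ici 0, f x ≤ C * ∫⁻ e, ENNReal.ofReal e ∂ν := by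
  have hIci : Ici (0 : ℝ) = ⋃ n : ℕ, Ico 0 (n : ℝ) := by
    ext x
    simp only [mem_Ici, mem_iUnion, mem_Ico]
    exact ⟨fun hx => (exists_nat_gt x).imp fun _ hn => ⟨hx, hn⟩, fun ⟨_, hx, _⟩ => hx⟩
  rw [hIci, setLIntegral_iUnion_of_directed _ (Monotone.directed_le fun m n hmn =>
    Ico_subset_Ico_right (Nat.cast_le.mpr hmn))]
  exact iSup_le fun n => setLIntegral_Ico_le_of_renewal_eq hν hf hu hC huC hren n

end RenewalInequality

section RandomWalk

theorem rwalk_eq_sum {α : Type*} (η : ℕ → α → ℝ) (n : ℕ) :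
    rwalk η n = ∑ j ∈ Finset.range n, η j := by
  ext ω
  simp [rwalk]

theorem rwalk_succ {α : Type*} (η : ℕ → α → ℝ) (n : ℕ) : rwalk η (n + 1) = rwalk η n + η n := by
  rw [rwalk_eq_sum, rwalk_eq_sum, Finset.sum_range_succ]

variable {η : ℕ → Ω → ℝ}

theorem measurable_rwalk (hη : ∀ i, Measurable (η i)) (n : ℕ) : Measurable (rwalk η n) :=
  Finset.measurable_sum _ fun i _ => hη i

theorem map_rwalk_zero {P : Measure Ω} [IsProbabilityMeasure P] :
    P.map (rwalk η 0) = Measure.dirac 0 := by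
  have h0 : rwalk η 0 = fun _ => 0 := by
    ext ω
    simp [rwalk]
  rw [h0, Measure.map_const, measure_univ, one_smul]

end RandomWalk

instance (P : Measure Ω) [IsFiniteMeasure P] (η : ℕ → Ω → ℝ) : SFinite (renewalMeasure P η) := by
  unfold renewalMeasure
  infer_instance

namespace RenewalSetup

variable {P : Measure Ω} {η : ℕ → Ω → ℝ}

theorem map_rwalk_succ [IsProbabilityMeasure P] (hr : RenewalSetup P η) (n : ℕ) :
    P.map (rwalk η (n + 1)) = P.map (rwalk η n) ∗ P.map (η 0) := by
  have hind : IndepFun (rwalk η n) (η n) P := by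
    rw [rwalk_eq_sum]
    exact hr.indep.indepFun_sum_range_succ hr.meas n
  rw [rwalk_succ, hind.map_add_eq_map_conv_map (measurable_rwalk hr.meas n) (hr.meas n),
    hr.ident n]

theorem ae_nonneg_renewalMeasure (hr : RenewalSetup P η) : ∀ᵐ y ∂renewalMeasure P η, 0 ≤ y := by
  have hη : ∀ᵐ ω ∂P, ∀ i, 0 ≤ η i ω := ae_all_iff.mpr hr.nonneg
  refine Measure.ae_sum_iff.mpr fun n => ?_
  refine (ae_map_iff (measurable_rwalk hr.meas n).aemeasurable measurableSet_Ici).mpr ?_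
  exact hη.mono fun ω hω => Finset.sum_nonneg fun i _ => hω i

theorem lintegral_ofReal_map_ne_top (hr : RenewalSetup P η) :
    ∫⁻ e, ENNReal.ofReal e ∂P.map (η 0) ≠ ⊤ := by
  rw [lintegral_map ENNReal.measurable_ofReal (hr.meas 0)]
  exact ne_top_of_le_ne_top hr.int.hasFiniteIntegral.ne
    (lintegral_mono fun ω => Real.ofReal_le_enorm _)

/-- The renewal equation `V* = δ₀ + V* ∗ F`, `F` the jump law, tested against `g (x + ·)`. -/
theorem lintegral_renewalMeasure_add [IsProbabilityMeasure P] (hr : RenewalSetup P η)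
    {g : ℝ → ℝ≥0∞} (hg : Measurable g) (x : ℝ) :
    ∫⁻ y, g (x + y) ∂renewalMeasure P η
      = g x + ∫⁻ e, ∫⁻ y, g (x + e + y) ∂renewalMeasure P η ∂P.map (η 0) := by
  have hgx : Measurable fun y => g (x + y) := hg.comp (measurable_const_add x)
  have hsucc : ∀ n, ∫⁻ y, g (x + y) ∂P.map (rwalk η (n + 1))
      = ∫⁻ s, ∫⁻ e, g (x + e + s) ∂P.map (η 0) ∂P.map (rwalk η n) := fun n => by
    rw [hr.map_rwalk_succ, Measure.lintegral_conv hgx]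
    simp only [add_comm, add_left_comm]
  calc ∫⁻ y, g (x + y) ∂renewalMeasure P η
      = ∑' n, ∫⁻ y, g (x + y) ∂P.map (rwalk η n) := lintegral_sum_measure _ _
    _ = g x + ∑' n, ∫⁻ y, g (x + y) ∂P.map (rwalk η (n + 1)) := by
        rw [tsum_eq_zero_add' ENNReal.summable, map_rwalk_zero, lintegral_dirac, add_zero]
    _ = g x + ∫⁻ s, ∫⁻ e, g (x + e + s) ∂P.map (η 0) ∂renewalMeasure P η := by
        rw [renewalMeasure, lintegral_sum_measure, tsum_congr hsucc]
    _ = g x + ∫⁻ e, ∫⁻ y, g (x + e + y) ∂renewalMeasure P η ∂P.map (η 0) := by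
        rw [lintegral_lintegral_swap (f := fun s e => g (x + e + s))]
        exact (hg.comp ((measurable_const.add measurable_snd).add measurable_fst)).aemeasurable

end RenewalSetup

theorem lebesgue_integrable_of_renewal_integral_bounded_general
    {Ω : Type*} [MeasurableSpace Ω] (P : Measure Ω) [IsProbabilityMeasure P]
    (η : ℕ → Ω → ℝ) (hr : RenewalSetup P η)
    (t : ℝ → ℝ) (htm : Measurable t)
    (C : ℝ≥0∞) (hC : C ≠ ⊤)
    (hsup : ∀ x : ℝ, 0 ≤ x →
      ∫⁻ y in Set.Ici (0 : ℝ), ENNReal.ofReal (t (x + y)) ∂(renewalMeasure P η) ≤ C) :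
    ∫⁻ y in Set.Ici (0 : ℝ), ENNReal.ofReal (t y) ≠ ⊤ := by
  have := Measure.isProbabilityMeasure_map (μ := P) (hr.meas 0).aemeasurable
  have hg : Measurable fun y => ENNReal.ofReal (t y) := htm.ennreal_ofReal
  have hjump : ∀ᵐ e ∂P.map (η 0), 0 ≤ e :=
    (ae_map_iff (hr.meas 0).aemeasurable measurableSet_Ici).mpr (hr.nonneg 0)
  rw [Measure.restrict_eq_self_of_ae_mem (s := Set.Ici 0) hr.ae_nonneg_renewalMeasure] at hsup
  refine ne_top_of_le_ne_top (mul_ne_top hC hr.lintegral_ofReal_map_ne_top) ?_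
  exact setLIntegral_Ici_le_of_renewal_eq hjump hg
    (hg.comp measurable_add).lintegral_prod_right' hC hsup
    fun x _ => hr.lintegral_renewalMeasure_add hg x

/-- if `t : ℝ⁺ → ℝ⁺` is measurable and
`sup_{x ≥ 0} ∫_{[0,∞)} t(x+y) dV*(y) < ∞`, then `∫₀^∞ t(y) dy < ∞`. -/
theorem lebesgue_integrable_of_renewal_integral_bounded
    {Ω : Type*} [MeasurableSpace Ω] (P : Measure Ω) [IsProbabilityMeasure P]
    (η : ℕ → Ω → ℝ) (hr : RenewalSetup P η)
    (t : ℝ → ℝ) (htm : Measurable t) (ht0 : ∀ y, 0 ≤ y → 0 ≤ t y)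
    (C : ℝ≥0∞) (hC : C ≠ ⊤)
    (hsup : ∀ x : ℝ, 0 ≤ x →
      ∫⁻ y in Set.Ici (0 : ℝ), ENNReal.ofReal (t (x + y)) ∂(renewalMeasure P η) ≤ C) :
    ∫⁻ y in Set.Ici (0 : ℝ), ENNReal.ofReal (t y) ≠ ⊤ :=
  lebesgue_integrable_of_renewal_integral_bounded_general P η hr t htm C hC hsup

end
end

section
/- There exist a continuous function t : [0,∞) → [0,∞) and a standard random walk (S_n*)_{n≥0} with S₀* = 0 and i.i.d. nonnegative jumps of finite positive mean having a nonarithmetic distribution, with renewal function V*(x) := Σ_{n≥0} P{S_n* ≤ x}, such that ∫_{[0,∞)} t(y) dV*(y) < ∞ and yet ∫₀^∞ t(y) dy = ∞. -/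
/-!
Let the jumps be `1` or `√2` with probability `1/2` each; this law is nonarithmetic because `√2`
is irrational. The walk then stays in the additive monoid `D` generated by `1` and `√2`, so `V*`
is carried by `D` and `∫ t dV* = 0` for every `t` vanishing on `D`. On the other hand `D` has at
most `(N + 3)²` points below `N + 2`, and deleting balls of radius `r = 1 / (4 (N + 3)²)` around
them leaves half of `[N, N + 1)`, where `dist(y, D) ≥ r`. Hence
`t y = 8 (y + 3)² dist(y, D)` has Lebesgue integral at least `1` over every `[N, N + 1)`.
-/

open MeasureTheory ProbabilityTheory Filter ENNReal NNReal

noncomputable section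

variable {Ω : Type*} [MeasurableSpace Ω]

open Set Metric Function

lemma rwalk_mem {α : Type*} (M : AddSubmonoid ℝ) {η : ℕ → α → ℝ} {ω : α}
    (h : ∀ i, η i ω ∈ M) (n : ℕ) : rwalk η n ω ∈ M :=
  M.sum_mem fun i _ => h i

lemma ae_renewalMeasure_mem {P : Measure Ω} {η : ℕ → Ω → ℝ} (hη : ∀ i, Measurable (η i))
    {M : AddSubmonoid ℝ} (hM : MeasurableSet (M : Set ℝ)) (h : ∀ i, ∀ᵐ ω ∂P, η i ω ∈ M) :
    ∀ᵐ y ∂renewalMeasure P η, y ∈ M := by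
  refine (Measure.ae_sum_iff' (p := (· ∈ M)) hM).2 fun n => ?_
  have hS : Measurable (rwalk η n) := Finset.measurable_sum _ fun i _ => hη i
  rw [ae_map_iff (p := (· ∈ M)) hS.aemeasurable hM]
  filter_upwards [ae_all_iff.2 h] with ω hω using rwalk_mem M hω n

lemma ae_eval_infinitePi {ν : Measure ℝ} [IsProbabilityMeasure ν] {p : ℝ → Prop}
    (h : ∀ᵐ x ∂ν, p x) (i : ℕ) : ∀ᵐ ω ∂Measure.infinitePi (fun _ : ℕ => ν), p (ω i) :=
  ae_of_ae_map (measurable_pi_apply i).aemeasurable <| by rwa [Measure.infinitePi_map_eval]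

lemma renewalSetup_infinitePi (ν : Measure ℝ) [IsProbabilityMeasure ν]
    (hnonneg : ∀ᵐ x ∂ν, 0 ≤ x) (hint : Integrable id ν) (hmean : 0 < ∫ x, x ∂ν)
    (hnonarith : ∀ d : ℝ, 0 < d → ν {x | ∃ k : ℤ, x = d * k} ≠ 1) :
    RenewalSetup (Measure.infinitePi fun _ : ℕ => ν) (fun i ω => ω i) where
  meas i := measurable_pi_apply i
  indep := iIndepFun_infinitePi (X := fun _ => id) fun _ => measurable_id
  ident i := by simp only [Measure.infinitePi_map_eval]
  nonneg := ae_eval_infinitePi hnonneg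
  int := (measurePreserving_eval_infinitePi _ 0).integrable_comp_of_integrable (g := id) hint
  mean_pos := by
    have h := integral_map (μ := Measure.infinitePi fun _ : ℕ => ν) (f := fun x => x)
      (measurable_pi_apply 0).aemeasurable aestronglyMeasurable_id
    rwa [← h, Measure.infinitePi_map_eval]
  nonarith d hd h := hnonarith d hd <| le_antisymm prob_le_one <| by
    rw [← Measure.infinitePi_map_eval (fun _ : ℕ => ν) 0, ← h]
    exact Measure.le_map_apply (measurable_pi_apply 0).aemeasurable _

def jumpLaw : Measure ℝ := (2⁻¹ : ℝ≥0∞) • (Measure.dirac 1 + Measure.dirac √2)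

instance : IsProbabilityMeasure jumpLaw :=
  ⟨by simp [jumpLaw, ENNReal.inv_two_add_inv_two]⟩

lemma jumpLaw_apply (s : Set ℝ) :
    jumpLaw s = 2⁻¹ * (s.indicator 1 1 + s.indicator 1 √2) := by
  simp [jumpLaw, Measure.dirac_apply, mul_add]

lemma ae_jumpLaw : ∀ᵐ x ∂jumpLaw, x = 1 ∨ x = √2 := by
  simp [ae_iff, jumpLaw_apply]

lemma integrable_jumpLaw : Integrable id jumpLaw :=
  ((integrable_dirac (by simp)).add_measure (integrable_dirac (by simp))).smul_measure (by simp)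

lemma integral_jumpLaw : ∫ x, x ∂jumpLaw = (1 + √2) / 2 := by
  rw [jumpLaw, integral_smul_measure, integral_add_measure (integrable_dirac (by simp))
    (integrable_dirac (by simp)), integral_dirac, integral_dirac]
  simp; ring

lemma jumpLaw_nonarith (d : ℝ) : jumpLaw {x | ∃ k : ℤ, x = d * k} ≠ 1 := by
  set S := {x : ℝ | ∃ k : ℤ, x = d * k}
  have not_both : ¬((1 : ℝ) ∈ S ∧ √2 ∈ S) := by
    rintro ⟨⟨k₁, h₁⟩, ⟨k₂, h₂⟩⟩
    have hk₁ : k₁ ≠ 0 := by rintro rfl; simp at h₁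
    exact (irrational_sqrt_two.mul_intCast hk₁).ne_int k₂ (by linear_combination k₁ * h₂ - k₂ * h₁)
  by_cases h₁ : (1 : ℝ) ∈ S <;> by_cases h₂ : √2 ∈ S
  · exact (not_both ⟨h₁, h₂⟩).elim
  all_goals simp [jumpLaw_apply, h₁, h₂]

lemma countable_closure_pair (a b : ℝ) : (AddSubmonoid.closure {a, b} : Set ℝ).Countable := by
  convert countable_range fun p : ℕ × ℕ => p.1 • a + p.2 • b
  ext x
  simp [AddSubmonoid.mem_closure_pair]

lemma closure_pair_inter_Iic_subset {a b : ℝ} (ha : 1 ≤ a) (hb : 1 ≤ b) (N : ℕ) :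
    (AddSubmonoid.closure {a, b} : Set ℝ) ∩ Iic (N : ℝ) ⊆
      ((Finset.range (N + 1) ×ˢ Finset.range (N + 1)).image
        fun p : ℕ × ℕ => p.1 • a + p.2 • b : Finset ℝ) := by
  rintro _ ⟨hx, hxN⟩
  obtain ⟨m, n, rfl⟩ := (AddSubmonoid.mem_closure_pair a b _).1 hx
  simp only [mem_Iic, nsmul_eq_mul] at hxN
  have hm₀ : (0 : ℝ) ≤ m := m.cast_nonneg
  have hn₀ : (0 : ℝ) ≤ n := n.cast_nonneg
  have hm : m < N + 1 := Nat.lt_succ_of_le (by exact_mod_cast (by nlinarith : (m : ℝ) ≤ N))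
  have hn : n < N + 1 := Nat.lt_succ_of_le (by exact_mod_cast (by nlinarith : (n : ℝ) ≤ N))
  exact Finset.mem_coe.2 <| Finset.mem_image.2
    ⟨(m, n), Finset.mem_product.2 ⟨Finset.mem_range.2 hm, Finset.mem_range.2 hn⟩, rfl⟩

lemma volume_biUnion_ball_le (F : Finset ℝ) (r : ℝ) :
    volume (⋃ d ∈ F, ball d r) ≤ F.card * ENNReal.ofReal (2 * r) :=
  (measure_biUnion_finset_le _ _).trans (by simp [Real.volume_ball])

lemma le_lintegral_Ico_infDist {D : Set ℝ} (hD : D.Nonempty) {F : Finset ℝ} {a K : ℝ}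
    (hF : D ∩ Iio (a + 2) ⊆ F) (hK : 1 ≤ K) (hcard : (F.card : ℝ) ≤ K) :
    ENNReal.ofReal (8 * K)⁻¹ ≤ ∫⁻ y in Ico a (a + 1), ENNReal.ofReal (infDist y D) := by
  set r := (4 * K)⁻¹
  set A := Ico a (a + 1) \ ⋃ d ∈ F, ball d r
  have hr : r ≤ 1 := inv_le_one_of_one_le₀ (by linarith)
  have hballs : volume (⋃ d ∈ F, ball d r) ≤ ENNReal.ofReal (1 / 2) :=
    (volume_biUnion_ball_le F r).trans <| by
      rw [← ENNReal.ofReal_natCast, ← ENNReal.ofReal_mul (by positivity)]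
      exact ENNReal.ofReal_le_ofReal <| by
        calc (F.card : ℝ) * (2 * r) ≤ K * (2 * r) := by gcongr
          _ = 1 / 2 := by simp only [r]; field_simp; ring
  have hA : ENNReal.ofReal (1 / 2) ≤ volume A :=
    calc ENNReal.ofReal (1 / 2) = 1 - ENNReal.ofReal (1 / 2) := by
          rw [← ENNReal.ofReal_one, ← ENNReal.ofReal_sub _ (by norm_num)]; norm_num
      _ ≤ volume (Ico a (a + 1)) - volume (⋃ d ∈ F, ball d r) := by
          rw [Real.volume_Ico, add_sub_cancel_left, ENNReal.ofReal_one]; gcongr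
      _ ≤ volume A := le_measure_sdiff
  have hdist : ∀ y ∈ A, r ≤ infDist y D := by
    rintro y ⟨hy, hyF⟩
    refine (le_infDist hD).2 fun z hz => ?_
    by_cases hza : z < a + 2
    · have hzF : z ∈ F := hF ⟨hz, hza⟩
      simpa [dist_comm] using fun h => hyF (mem_biUnion hzF h)
    · rw [Real.dist_eq, abs_sub_comm]
      linarith [le_abs_self (z - y), hy.2]
  calc ENNReal.ofReal (8 * K)⁻¹ = ENNReal.ofReal r * ENNReal.ofReal (1 / 2) := by
        rw [← ENNReal.ofReal_mul (by positivity)]; congr 1; simp only [r]; field_simp; ring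
    _ ≤ ENNReal.ofReal r * volume A := by gcongr
    _ = ∫⁻ _ in A, ENNReal.ofReal r := (setLIntegral_const A _).symm
    _ ≤ ∫⁻ y in A, ENNReal.ofReal (infDist y D) :=
        setLIntegral_mono (continuous_infDist_pt D).measurable.ennreal_ofReal
          fun y hy => ENNReal.ofReal_le_ofReal (hdist y hy)
    _ ≤ ∫⁻ y in Ico a (a + 1), ENNReal.ofReal (infDist y D) := lintegral_mono_set sdiff_subset

def weightedDist (D : Set ℝ) (y : ℝ) : ℝ := 8 * (y + 3) ^ 2 * infDist y D

lemma continuous_weightedDist (D : Set ℝ) : Continuous (weightedDist D) :=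
  (by fun_prop : Continuous fun y : ℝ => 8 * (y + 3) ^ 2).mul (continuous_infDist_pt D)

lemma weightedDist_nonneg (D : Set ℝ) (y : ℝ) : 0 ≤ weightedDist D y :=
  mul_nonneg (by positivity) infDist_nonneg

lemma setLIntegral_weightedDist_eq_zero {D : Set ℝ} {μ : Measure ℝ} (h : ∀ᵐ y ∂μ, y ∈ D)
    (s : Set ℝ) : ∫⁻ y in s, ENNReal.ofReal (weightedDist D y) ∂μ = 0 := by
  refine (lintegral_congr_ae <| ae_restrict_of_ae <| h.mono fun y hy => ?_).trans lintegral_zero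
  simp [weightedDist, infDist_zero_of_mem hy]

lemma one_le_lintegral_Ico_weightedDist {D : Set ℝ} (hD : D.Nonempty) {F : Finset ℝ} (N : ℕ)
    (hF : D ∩ Iio ((N : ℝ) + 2) ⊆ F) (hcard : F.card ≤ (N + 3) ^ 2) :
    1 ≤ ∫⁻ y in Ico (N : ℝ) (N + 1), ENNReal.ofReal (weightedDist D y) := by
  set K : ℝ := ((N : ℝ) + 3) ^ 2
  have hK : 1 ≤ K := one_le_pow₀ (by linarith [N.cast_nonneg (α := ℝ)])
  have hmeas : Measurable fun y => ENNReal.ofReal (infDist y D) :=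
    (continuous_infDist_pt D).measurable.ennreal_ofReal
  calc 1 = ENNReal.ofReal (8 * K) * ENNReal.ofReal (8 * K)⁻¹ := by
        rw [← ENNReal.ofReal_mul (by positivity), mul_inv_cancel₀ (by positivity),
          ENNReal.ofReal_one]
    _ ≤ ENNReal.ofReal (8 * K) * ∫⁻ y in Ico (N : ℝ) (N + 1), ENNReal.ofReal (infDist y D) := by
        gcongr
        exact le_lintegral_Ico_infDist hD hF hK (by simp only [K]; exact_mod_cast hcard)
    _ = ∫⁻ y in Ico (N : ℝ) (N + 1), ENNReal.ofReal (8 * K) * ENNReal.ofReal (infDist y D) :=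
        (lintegral_const_mul _ hmeas).symm
    _ ≤ ∫⁻ y in Ico (N : ℝ) (N + 1), ENNReal.ofReal (weightedDist D y) :=
        setLIntegral_mono (continuous_weightedDist D).measurable.ennreal_ofReal fun y hy => by
          rw [← ENNReal.ofReal_mul (by positivity)]
          refine ENNReal.ofReal_le_ofReal (mul_le_mul_of_nonneg_right ?_ infDist_nonneg)
          have hy : (N : ℝ) ≤ y := hy.1
          simp only [K]
          gcongr

lemma lintegral_Ici_eq_top_of_one_le {f : ℝ → ℝ≥0∞}
    (h : ∀ N : ℕ, 1 ≤ ∫⁻ y in Ico (N : ℝ) (N + 1), f y) : ∫⁻ y in Ici 0, f y = ⊤ := by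
  have hdisj : Pairwise (Disjoint on fun N : ℕ => Ico (N : ℝ) (N + 1)) := by
    intro m n hmn
    simpa using pairwise_disjoint_Ico_intCast ℝ (Nat.cast_injective.ne hmn : (m : ℤ) ≠ n)
  refine top_le_iff.1 ?_
  calc ⊤ = ∑' _ : ℕ, (1 : ℝ≥0∞) := (ENNReal.tsum_const_eq_top_of_ne_zero one_ne_zero).symm
    _ ≤ ∑' N : ℕ, ∫⁻ y in Ico (N : ℝ) (N + 1), f y := ENNReal.tsum_le_tsum h
    _ = ∫⁻ y in ⋃ N : ℕ, Ico (N : ℝ) (N + 1), f y :=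
        (lintegral_iUnion (fun _ => measurableSet_Ico) hdisj f).symm
    _ ≤ ∫⁻ y in Ici 0, f y :=
        lintegral_mono_set (iUnion_subset fun N _ hy => N.cast_nonneg.trans hy.1)

lemma lintegral_Ici_weightedDist_closure_pair_eq_top {a b : ℝ} (ha : 1 ≤ a) (hb : 1 ≤ b) :
    ∫⁻ y in Ici 0, ENNReal.ofReal (weightedDist (AddSubmonoid.closure {a, b}) y) = ⊤ := by
  refine lintegral_Ici_eq_top_of_one_le fun N => ?_
  have hF := closure_pair_inter_Iic_subset ha hb (N + 2)
  refine one_le_lintegral_Ico_weightedDist ⟨0, zero_mem _⟩ N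
    ((inter_subset_inter_right _ ?_).trans hF) (Finset.card_image_le.trans ?_)
  · push_cast
    exact Iio_subset_Iic_self
  · simp [sq]

/-- there exist a continuous function `t : ℝ⁺ → ℝ⁺` and a renewal process
with nonarithmetic jump distribution such that `∫_{[0,∞)} t(y) dV*(y) < ∞` and yet
`∫₀^∞ t(y) dy = ∞`. -/
theorem exists_finite_renewal_integral_not_lebesgue :
    ∃ (Ω : Type) (_ : MeasurableSpace Ω) (P : Measure Ω) (_ : IsProbabilityMeasure P)
      (η : ℕ → Ω → ℝ) (t : ℝ → ℝ),
      RenewalSetup P η ∧ Continuous t ∧ (∀ y, 0 ≤ t y) ∧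
      (∫⁻ y in Set.Ici (0 : ℝ), ENNReal.ofReal (t y) ∂(renewalMeasure P η)) ≠ ⊤ ∧
      (∫⁻ y in Set.Ici (0 : ℝ), ENNReal.ofReal (t y)) = ⊤ := by
  set D := AddSubmonoid.closure ({1, √2} : Set ℝ)
  have hsetup := renewalSetup_infinitePi jumpLaw
    (ae_jumpLaw.mono fun x hx => by rcases hx with rfl | rfl <;> positivity)
    integrable_jumpLaw (by rw [integral_jumpLaw]; positivity) fun d _ => jumpLaw_nonarith d
  have hjump : ∀ᵐ x ∂jumpLaw, x ∈ D := ae_jumpLaw.mono fun x hx =>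
    AddSubmonoid.subset_closure (by rcases hx with rfl | rfl <;> simp)
  have hV : ∀ᵐ y ∂renewalMeasure _ _, y ∈ D := ae_renewalMeasure_mem hsetup.meas
    (countable_closure_pair 1 √2).measurableSet (ae_eval_infinitePi hjump)
  exact ⟨ℕ → ℝ, inferInstance, _, inferInstance, _, weightedDist D, hsetup,
    continuous_weightedDist D, weightedDist_nonneg D,
    (setLIntegral_weightedDist_eq_zero hV _).trans_ne zero_ne_top,
    lintegral_Ici_weightedDist_closure_pair_eq_top le_rfl (Real.one_le_sqrt.2 one_le_two)⟩

end
end
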